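/- arXiv:2212.05133 — 6 statements merged into one kernel-verified Lean document; each statement's English description precedes it below -/
import Mathlib

section
/- Any subset A of the Hamming cube {0,1}^d whose Hamming diameter is at most 2t, where 2t ≤ d-1, has cardinality at most ∑_{i=0}^{t} C(d,i). (Kleitman's theorem, even diameter case.) -/
/-!
UV-compressions with `#(u ∪ v) ≤ 2` do not increase Hamming distances, so a family of diameter
at most `2t` may be replaced by one of the same size that is a lower set and is shifted (closed
under replacing an element by a smaller one). For such families a Harper-type
vertex-isoperimetric inequality holds: more than `∑_{i<j} C(n,i)` members force more than
`∑_{i≤j} C(n,i)` sets within distance one above them. If the family had more than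
`∑_{i≤t} C(n,i)` members, `n - 2t - 1` such expansions would give more than `∑_{i<n-t} C(n,i)`
sets, none of which is the complement of a member (that complement is too far away); together
with the complements these exceed the `2^n` subsets of `range n`.
-/

open Finset UV
open scoped FinsetFamily symmDiff

namespace Nat

theorem sum_range_choose_succ (m j : ℕ) :
    ∑ i ∈ range (j + 1), (m + 1).choose i =
      ∑ i ∈ range (j + 1), m.choose i + ∑ i ∈ range j, m.choose i := by
  induction j with
  | zero => simp
  | succ j ih =>
    rw [sum_range_succ, ih, choose_succ_succ', sum_range_succ _ (j + 1),
      sum_range_succ _ j]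
    ring

theorem sum_range_choose_sub_add_sum_range_choose {n t : ℕ} (htn : t ≤ n) :
    ∑ i ∈ range (n - t), n.choose i + ∑ i ∈ range (t + 1), n.choose i = 2 ^ n := by
  rw [← sum_range_choose n, show n + 1 = n - t + (t + 1) by omega, sum_range_add _ (n - t)]
  congr 1
  rw [← sum_range_reflect]
  refine sum_congr rfl fun i hi => ?_
  rw [mem_range] at hi
  rw [← choose_symm (by omega)]
  congr 1
  omega

end Nat

namespace Finset

variable {α : Type*} [DecidableEq α]

theorem card_symmDiff_le_left {s t : Finset α} (h : #t ≤ 2 * #(s ∩ t)) : #(s ∆ t) ≤ #s := by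
  have hs := card_sdiff_add_card_inter s t
  have ht := card_sdiff_add_card_inter t s
  rw [inter_comm] at ht
  calc #(s ∆ t) ≤ #(s \ t) + #(t \ s) := by rw [symmDiff_def]; exact card_union_le _ _
    _ ≤ #s := by omega

theorem isLowerSet_of_forall_erase_mem {𝒜 : Finset (Finset α)}
    (h : ∀ s ∈ 𝒜, ∀ a ∈ s, s.erase a ∈ 𝒜) : IsLowerSet (𝒜 : Set (Finset α)) := by
  intro s t hts hs
  induction s using Finset.strongInduction with
  | H s ih =>
    obtain rfl | ⟨a, has, hat⟩ := eq_or_ne t s |>.imp_right (fun hne => not_subset.1 fun hst =>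
      hne (Subset.antisymm hts hst))
    · exact hs
    · exact ih _ (erase_ssubset has) (subset_erase.2 ⟨hts, hat⟩) (h s hs a has)

end Finset

namespace UV

variable {α : Type*} [DecidableEq α] {u v a b : Finset α}

theorem compress_subset_union (u v a : Finset α) : compress u v a ⊆ a ∪ u := by
  unfold compress
  split_ifs
  · exact sdiff_subset
  · exact subset_union_left

theorem compress_of_not_disjoint_and_le (h : ¬(Disjoint u a ∧ v ≤ a)) : compress u v a = a :=
  if_neg h

theorem compress_eq_symmDiff (h : Disjoint u a ∧ v ≤ a) : compress u v a = a ∆ (u ∪ v) := by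
  rw [compress, if_pos h]
  ext x
  have hu : x ∈ u → x ∉ a := fun hx => disjoint_left.1 h.1 hx
  have hv : x ∈ v → x ∈ a := fun hx => h.2 hx
  simp only [sup_eq_union, mem_sdiff, mem_union, mem_symmDiff]
  tauto

theorem card_compress_symmDiff_le (huv : #(u ∪ v) ≤ 2) (hb : ¬(Disjoint u b ∧ v ≤ b))
    (a : Finset α) : #(compress u v a ∆ b) ≤ #(a ∆ b) := by
  by_cases ha : Disjoint u a ∧ v ≤ a
  · rw [compress_eq_symmDiff ha, symmDiff_right_comm]
    refine card_symmDiff_le_left (huv.trans ?_)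
    -- `b` is not compressible, so `a ∆ b` meets `u ∪ v`
    obtain ⟨x, hxu, hxb⟩ | ⟨x, hxv, hxb⟩ : (∃ x ∈ u, x ∈ b) ∨ ∃ x ∈ v, x ∉ b := by
      rw [not_and_or, not_disjoint_iff, not_subset] at hb
      exact hb
    · have hxa : x ∉ a := disjoint_left.1 ha.1 hxu
      have : x ∈ a ∆ b ∩ (u ∪ v) := by simp [mem_symmDiff, hxa, hxb, hxu]
      have := card_pos.2 ⟨x, this⟩
      omega
    · have hxa : x ∈ a := ha.2 hxv
      have : x ∈ a ∆ b ∩ (u ∪ v) := by simp [mem_symmDiff, hxa, hxb, hxv]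
      have := card_pos.2 ⟨x, this⟩
      omega
  · rw [compress_of_not_disjoint_and_le ha]

theorem card_symmDiff_compress_le (huv : #(u ∪ v) ≤ 2) (a b : Finset α) :
    #(compress u v a ∆ compress u v b) ≤ #(a ∆ b) := by
  by_cases hb : Disjoint u b ∧ v ≤ b
  · by_cases ha : Disjoint u a ∧ v ≤ a
    · rw [compress_eq_symmDiff ha, compress_eq_symmDiff hb, symmDiff_symmDiff_symmDiff_comm,
        symmDiff_self, symmDiff_bot]
    · rw [compress_of_not_disjoint_and_le ha, symmDiff_comm, symmDiff_comm a]
      exact card_compress_symmDiff_le huv ha b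
  · rw [compress_of_not_disjoint_and_le hb]
    exact card_compress_symmDiff_le huv hb a

variable {𝒜 : Finset (Finset α)} {D : ℕ}

theorem card_symmDiff_compress_right_le (huv : #(u ∪ v) ≤ 2)
    (hD : ∀ a ∈ 𝒜, ∀ b ∈ 𝒜, #(a ∆ b) ≤ D) (ha : a ∈ 𝒜) (hca : compress u v a ∈ 𝒜) (hb : b ∈ 𝒜) :
    #(a ∆ compress u v b) ≤ D := by
  by_cases hac : Disjoint u a ∧ v ≤ a
  · by_cases hbc : Disjoint u b ∧ v ≤ b
    · have : a ∆ compress u v b = compress u v a ∆ b := by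
        rw [compress_eq_symmDiff hac, compress_eq_symmDiff hbc, symmDiff_right_comm,
          symmDiff_assoc]
      rw [this]
      exact hD _ hca _ hb
    · rw [compress_of_not_disjoint_and_le hbc]
      exact hD _ ha _ hb
  · rw [← compress_of_not_disjoint_and_le hac]
    exact (card_symmDiff_compress_le huv a b).trans (hD _ ha _ hb)

theorem card_symmDiff_le_of_mem_compression (huv : #(u ∪ v) ≤ 2)
    (hD : ∀ a ∈ 𝒜, ∀ b ∈ 𝒜, #(a ∆ b) ≤ D) :
    ∀ a ∈ 𝓒 u v 𝒜, ∀ b ∈ 𝓒 u v 𝒜, #(a ∆ b) ≤ D := by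
  intro a' ha' b' hb'
  rcases mem_compression.1 ha' with ⟨ha, hca⟩ | ⟨-, a, ha, rfl⟩ <;>
    rcases mem_compression.1 hb' with ⟨hb, hcb⟩ | ⟨-, b, hb, rfl⟩
  · exact hD _ ha _ hb
  · exact card_symmDiff_compress_right_le huv hD ha hca hb
  · rw [symmDiff_comm]
    exact card_symmDiff_compress_right_le huv hD hb hcb ha
  · exact (card_symmDiff_compress_le huv a b).trans (hD _ ha _ hb)

theorem sum_compress_add_sum {M : Type*} [AddCommMonoid M] (f : α → M)
    (h : Disjoint u a ∧ v ≤ a) :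
    ∑ x ∈ compress u v a, f x + ∑ x ∈ v, f x = ∑ x ∈ a, f x + ∑ x ∈ u, f x := by
  rw [compress_of_disjoint_of_le h.1 h.2, sup_eq_union,
    sum_sdiff (h.2.trans subset_union_left), sum_union h.1.symm]

theorem sum_compress_lt (f : α → ℕ) (huv : ∑ x ∈ u, f x < ∑ x ∈ v, f x)
    (ha : compress u v a ≠ a) : ∑ x ∈ compress u v a, f x < ∑ x ∈ a, f x := by
  by_cases hac : Disjoint u a ∧ v ≤ a
  · have := sum_compress_add_sum f hac
    omega
  · exact absurd (compress_of_not_disjoint_and_le hac) ha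

theorem sum_sum_compression_lt (f : α → ℕ) (huv : ∑ x ∈ u, f x < ∑ x ∈ v, f x)
    (ha : a ∈ 𝒜) (hca : compress u v a ∉ 𝒜) :
    ∑ s ∈ 𝓒 u v 𝒜, ∑ x ∈ s, f x < ∑ s ∈ 𝒜, ∑ x ∈ s, f x := by
  rw [compression, sum_union compress_disjoint, filter_image, sum_image compress_injOn]
  conv_rhs => rw [← filter_union_filter_not_eq (fun s => compress u v s ∈ 𝒜) 𝒜]
  rw [sum_union (disjoint_filter_filter_not _ _ _), add_lt_add_iff_left]
  refine sum_lt_sum_of_nonempty ⟨a, mem_filter.2 ⟨ha, hca⟩⟩ fun s hs => ?_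
  refine sum_compress_lt f huv fun h => (mem_filter.1 hs).2 ?_
  rw [h]
  exact (mem_filter.1 hs).1

theorem compression_subset_powerset {G : Finset α} (h𝒜 : 𝒜 ⊆ G.powerset) (hu : u ⊆ G) :
    𝓒 u v 𝒜 ⊆ G.powerset := by
  intro s hs
  rcases mem_compression.1 hs with ⟨hs, -⟩ | ⟨-, a, ha, rfl⟩
  · exact h𝒜 hs
  · exact mem_powerset.2 ((compress_subset_union u v a).trans
      (union_subset (mem_powerset.1 (h𝒜 ha)) hu))

end UV

namespace Finset

def IsShifted {α : Type*} [LinearOrder α] (𝒜 : Finset (Finset α)) : Prop :=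
  ∀ ⦃s⦄, s ∈ 𝒜 → ∀ ⦃i j⦄, i < j → j ∈ s → i ∉ s → insert i (s.erase j) ∈ 𝒜

variable {n : ℕ} {𝒜 : Finset (Finset ℕ)}

-- Among the families with the given size and diameter bound, one of least total weight
-- `∑ x ∈ s, (x + 1)` is stable under every compression that lowers the weight.
theorem exists_isLowerSet_isShifted {D : ℕ} (h𝒜 : 𝒜 ⊆ (range n).powerset)
    (hD : ∀ a ∈ 𝒜, ∀ b ∈ 𝒜, #(a ∆ b) ≤ D) :
    ∃ ℬ ⊆ (range n).powerset, #ℬ = #𝒜 ∧ (∀ a ∈ ℬ, ∀ b ∈ ℬ, #(a ∆ b) ≤ D) ∧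
      IsLowerSet (ℬ : Set (Finset ℕ)) ∧ ℬ.IsShifted := by
  set 𝒮 := {ℬ ∈ (range n).powerset.powerset |
    #ℬ = #𝒜 ∧ ∀ a ∈ ℬ, ∀ b ∈ ℬ, #(a ∆ b) ≤ D}
  obtain ⟨ℬ, hℬ, hmin⟩ := exists_min_image 𝒮 (fun ℬ => ∑ s ∈ ℬ, ∑ x ∈ s, (x + 1))
    ⟨𝒜, mem_filter.2 ⟨mem_powerset.2 h𝒜, rfl, hD⟩⟩
  obtain ⟨hℬn, hcard, hℬD⟩ := mem_filter.1 hℬ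
  rw [mem_powerset] at hℬn
  have hstable : ∀ u v, u ⊆ range n → #(u ∪ v) ≤ 2 →
      ∑ x ∈ u, (x + 1) < ∑ x ∈ v, (x + 1) → ∀ s ∈ ℬ, compress u v s ∈ ℬ := by
    intro u v hu huv hw s hs
    by_contra hcs
    have hlt := sum_sum_compression_lt _ hw hs hcs
    have hle := hmin (𝓒 u v ℬ) (mem_filter.2 ⟨mem_powerset.2 (compression_subset_powerset hℬn hu),
      (card_compression u v ℬ).trans hcard, card_symmDiff_le_of_mem_compression huv hℬD⟩)
    omega
  refine ⟨ℬ, hℬn, hcard, hℬD, isLowerSet_of_forall_erase_mem fun s hs a ha => ?_, ?_⟩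
  · have := hstable ∅ {a} (empty_subset _) (by simp) (by simp) s hs
    rwa [compress_of_disjoint_of_le (disjoint_empty_left s) (singleton_subset_iff.2 ha),
      sup_eq_union, union_empty, sdiff_singleton_eq_erase] at this
  · intro s hs i j hij hj hi
    have hjn : j < n := mem_range.1 (mem_powerset.1 (hℬn hs) hj)
    have := hstable {i} {j} (singleton_subset_iff.2 (mem_range.2 (hij.trans hjn)))
      (card_union_le _ _) (by simpa using hij) s hs
    rwa [compress_of_disjoint_of_le (disjoint_singleton_left.2 hi) (singleton_subset_iff.2 hj),
      sup_eq_union, union_singleton, insert_sdiff_of_notMem _ (by simpa using hij.ne),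
      sdiff_singleton_eq_erase] at this

def nbhd (n : ℕ) (𝒜 : Finset (Finset ℕ)) : Finset (Finset ℕ) :=
  𝒜 ∪ 𝒜.biUnion fun s => (range n).image fun i => insert i s

theorem mem_nbhd {t : Finset ℕ} : t ∈ nbhd n 𝒜 ↔ t ∈ 𝒜 ∨ ∃ s ∈ 𝒜, ∃ i < n, insert i s = t := by
  simp [nbhd]

theorem subset_nbhd : 𝒜 ⊆ nbhd n 𝒜 := subset_union_left

theorem nbhd_subset_powerset (h𝒜 : 𝒜 ⊆ (range n).powerset) : nbhd n 𝒜 ⊆ (range n).powerset := by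
  intro t ht
  rcases mem_nbhd.1 ht with ht | ⟨s, hs, i, hi, rfl⟩
  · exact h𝒜 ht
  · exact mem_powerset.2 (insert_subset (mem_range.2 hi) (mem_powerset.1 (h𝒜 hs)))

theorem IsLowerSet.nbhd (h𝒜 : IsLowerSet (𝒜 : Set (Finset ℕ))) :
    IsLowerSet (nbhd n 𝒜 : Set (Finset ℕ)) := by
  intro t r hrt ht
  rcases mem_nbhd.1 ht with ht | ⟨s, hs, i, hi, rfl⟩
  · exact subset_nbhd (h𝒜 hrt ht)
  by_cases hir : i ∈ r
  · exact mem_nbhd.2 (Or.inr ⟨r.erase i, h𝒜 (subset_insert_iff.1 hrt) hs, i, hi, insert_erase hir⟩)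
  · exact subset_nbhd (h𝒜 ((subset_insert_iff_of_notMem hir).1 hrt) hs)

theorem IsShifted.nbhd (h𝒜 : 𝒜.IsShifted) : (nbhd n 𝒜).IsShifted := by
  intro t ht i j hij hjt hit
  rcases mem_nbhd.1 ht with ht | ⟨s, hs, a, ha, rfl⟩
  · exact subset_nbhd (h𝒜 ht hij hjt hit)
  have his : i ∉ s := fun h => hit (mem_insert_of_mem h)
  by_cases haj : a = j
  · subst haj
    by_cases has : a ∈ s
    · rw [insert_eq_of_mem has] at hit ⊢
      exact subset_nbhd (h𝒜 hs hij has hit)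
    · rw [erase_insert has]
      exact mem_nbhd.2 (Or.inr ⟨s, hs, i, hij.trans ha, rfl⟩)
  · have hjs : j ∈ s := (mem_insert.1 hjt).resolve_left (Ne.symm haj)
    refine mem_nbhd.2 (Or.inr ⟨insert i (s.erase j), h𝒜 hs hij hjs his, a, ha, ?_⟩)
    rw [erase_insert_of_ne haj, insert_comm]

theorem nonMemberSubfamily_nbhd_succ :
    nonMemberSubfamily n (nbhd (n + 1) 𝒜) = nbhd n (nonMemberSubfamily n 𝒜) := by
  ext t
  simp only [mem_nonMemberSubfamily, mem_nbhd]
  constructor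
  · rintro ⟨ht | ⟨s, hs, i, hi, rfl⟩, hnt⟩
    · exact Or.inl ⟨ht, hnt⟩
    · rw [mem_insert, not_or] at hnt
      exact Or.inr ⟨s, ⟨hs, hnt.2⟩, i, by omega, rfl⟩
  · rintro (⟨ht, hnt⟩ | ⟨s, ⟨hs, hns⟩, i, hi, rfl⟩)
    · exact ⟨Or.inl ht, hnt⟩
    · exact ⟨Or.inr ⟨s, hs, i, by omega, rfl⟩, by simp [hns, hi.ne']⟩

theorem card_nbhd_nonMemberSubfamily_add_le :
    #(nbhd n (nonMemberSubfamily n 𝒜)) + #(nonMemberSubfamily n 𝒜) ≤ #(nbhd (n + 1) 𝒜) := by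
  have hmem : nonMemberSubfamily n 𝒜 ⊆ memberSubfamily n (nbhd (n + 1) 𝒜) := by
    intro s hs
    obtain ⟨hs, hns⟩ := mem_nonMemberSubfamily.1 hs
    exact mem_memberSubfamily.2 ⟨mem_nbhd.2 (Or.inr ⟨s, hs, n, n.lt_succ_self, rfl⟩), hns⟩
  rw [← card_memberSubfamily_add_card_nonMemberSubfamily n (nbhd (n + 1) 𝒜),
    nonMemberSubfamily_nbhd_succ, add_comm]
  exact Nat.add_le_add_right (card_le_card hmem) _

theorem nbhd_memberSubfamily_subset (hlow : IsLowerSet (𝒜 : Set (Finset ℕ)))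
    (hshift : 𝒜.IsShifted) :
    nbhd n (memberSubfamily n 𝒜) ⊆ nonMemberSubfamily n 𝒜 := by
  intro t ht
  rcases mem_nbhd.1 ht with ht | ⟨s, hs, i, hi, rfl⟩
  · exact hlow.memberSubfamily_subset_nonMemberSubfamily ht
  obtain ⟨hs, hns⟩ := mem_memberSubfamily.1 hs
  by_cases his : i ∈ s
  · rw [insert_eq_of_mem his]
    exact mem_nonMemberSubfamily.2 ⟨hlow (subset_insert n s) hs, hns⟩
  · have := hshift hs hi (mem_insert_self n s) (by simp [his, hi.ne])
    rw [erase_insert hns] at this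
    exact mem_nonMemberSubfamily.2 ⟨this, by simp [hns, hi.ne']⟩

theorem memberSubfamily_subset_powerset (h𝒜 : 𝒜 ⊆ (range (n + 1)).powerset) :
    memberSubfamily n 𝒜 ⊆ (range n).powerset := by
  intro s hs
  obtain ⟨hs, hns⟩ := mem_memberSubfamily.1 hs
  have := mem_powerset.1 (h𝒜 hs)
  rw [range_add_one, insert_subset_insert_iff hns] at this
  exact mem_powerset.2 this

theorem nonMemberSubfamily_subset_powerset (h𝒜 : 𝒜 ⊆ (range (n + 1)).powerset) :
    nonMemberSubfamily n 𝒜 ⊆ (range n).powerset := by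
  intro s hs
  obtain ⟨hs, hns⟩ := mem_nonMemberSubfamily.1 hs
  have := mem_powerset.1 (h𝒜 hs)
  rw [range_add_one, subset_insert_iff_of_notMem hns] at this
  exact mem_powerset.2 this

theorem IsShifted.memberSubfamily (h𝒜 : 𝒜 ⊆ (range (n + 1)).powerset) (hshift : 𝒜.IsShifted) :
    (memberSubfamily n 𝒜).IsShifted := by
  intro s hs i j hij hjs his
  have hjn : j < n := mem_range.1 (mem_powerset.1 (memberSubfamily_subset_powerset h𝒜 hs) hjs)
  obtain ⟨hs, hns⟩ := mem_memberSubfamily.1 hs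
  have := hshift hs hij (mem_insert_of_mem hjs) (by simp [his, (hij.trans hjn).ne])
  rw [erase_insert_of_ne hjn.ne', insert_comm] at this
  refine mem_memberSubfamily.2 ⟨this, ?_⟩
  simp [hns, (hij.trans hjn).ne']

theorem IsShifted.nonMemberSubfamily (h𝒜 : 𝒜 ⊆ (range (n + 1)).powerset)
    (hshift : 𝒜.IsShifted) : (nonMemberSubfamily n 𝒜).IsShifted := by
  intro s hs i j hij hjs his
  have hjn : j < n := mem_range.1 (mem_powerset.1 (nonMemberSubfamily_subset_powerset h𝒜 hs) hjs)
  obtain ⟨hs, hns⟩ := mem_nonMemberSubfamily.1 hs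
  refine mem_nonMemberSubfamily.2 ⟨hshift hs hij hjs his, ?_⟩
  simp [hns, (hij.trans hjn).ne']

theorem card_nbhd_gt {j : ℕ} (hjn : j < n) (h𝒜 : 𝒜 ⊆ (range n).powerset)
    (hlow : IsLowerSet (𝒜 : Set (Finset ℕ))) (hshift : 𝒜.IsShifted)
    (hcard : ∑ i ∈ range j, n.choose i < #𝒜) :
    ∑ i ∈ range (j + 1), n.choose i < #(nbhd n 𝒜) := by
  induction n generalizing j 𝒜 with
  | zero => omega
  | succ m ih =>
    set 𝒜₀ := nonMemberSubfamily m 𝒜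
    set 𝒜₁ := memberSubfamily m 𝒜
    have hsplit : #𝒜₁ + #𝒜₀ = #𝒜 := card_memberSubfamily_add_card_nonMemberSubfamily m 𝒜
    have hnbhd : #(nbhd m 𝒜₀) + #𝒜₀ ≤ #(nbhd (m + 1) 𝒜) := card_nbhd_nonMemberSubfamily_add_le
    have hpascal := Nat.sum_range_choose_succ m j
    by_cases h₀ : ∑ i ∈ range j, m.choose i < #𝒜₀
    · have : ∑ i ∈ range (j + 1), m.choose i ≤ #(nbhd m 𝒜₀) := by
        rcases (Nat.lt_succ_iff.1 hjn).lt_or_eq with hjm | rfl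
        · exact (ih hjm (nonMemberSubfamily_subset_powerset h𝒜) hlow.nonMemberSubfamily
            (hshift.nonMemberSubfamily h𝒜) h₀).le
        · rw [sum_range_succ, Nat.choose_self]
          exact h₀.trans_le (card_le_card subset_nbhd)
      omega
    -- Otherwise `𝒜₁` is large, and its neighbourhood inside `𝒜₀` makes `𝒜₀` large after all.
    · exfalso
      have h₁₀ : #(nbhd m 𝒜₁) ≤ #𝒜₀ := card_le_card (nbhd_memberSubfamily_subset hlow hshift)
      obtain _ | k := j
      · have := card_le_card (subset_nbhd (n := m) (𝒜 := 𝒜₁))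
        simp only [range_zero, sum_empty] at hcard h₀
        omega
      · have hpascal' := Nat.sum_range_choose_succ m k
        have := ih (j := k) (𝒜 := 𝒜₁) (by omega) (memberSubfamily_subset_powerset h𝒜)
          hlow.memberSubfamily (hshift.memberSubfamily h𝒜) (by omega)
        omega

theorem card_nbhd_iterate_gt {j s : ℕ} (hjsn : j + s ≤ n) (h𝒜 : 𝒜 ⊆ (range n).powerset)
    (hlow : IsLowerSet (𝒜 : Set (Finset ℕ))) (hshift : 𝒜.IsShifted)
    (hcard : ∑ i ∈ range j, n.choose i < #𝒜) :
    ∑ i ∈ range (j + s), n.choose i < #((nbhd n)^[s] 𝒜) := by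
  induction s generalizing j 𝒜 with
  | zero => exact hcard
  | succ s ih =>
    rw [Function.iterate_succ_apply, ← add_assoc, add_right_comm]
    exact ih (by omega) (nbhd_subset_powerset h𝒜) hlow.nbhd hshift.nbhd
      (card_nbhd_gt (by omega) h𝒜 hlow hshift hcard)

theorem nbhd_iterate_subset_powerset (h𝒜 : 𝒜 ⊆ (range n).powerset) (s : ℕ) :
    (nbhd n)^[s] 𝒜 ⊆ (range n).powerset :=
  Function.Iterate.rec (· ⊆ (range n).powerset) h𝒜 (fun _ => nbhd_subset_powerset) s

theorem exists_subset_of_mem_nbhd_iterate {s : ℕ} {t : Finset ℕ} (ht : t ∈ (nbhd n)^[s] 𝒜) :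
    ∃ r ∈ 𝒜, r ⊆ t ∧ #t ≤ #r + s := by
  induction s generalizing t with
  | zero => exact ⟨t, ht, Subset.rfl, le_rfl⟩
  | succ s ih =>
    rw [Function.iterate_succ_apply'] at ht
    rcases mem_nbhd.1 ht with ht | ⟨t', ht', i, -, rfl⟩
    · obtain ⟨r, hr, hrt, hcard⟩ := ih ht
      exact ⟨r, hr, hrt, by omega⟩
    · obtain ⟨r, hr, hrt, hcard⟩ := ih ht'
      exact ⟨r, hr, hrt.trans (subset_insert i t'), by grind [card_insert_le]⟩

theorem card_add_card_le_two_pow_of_sdiff_notMem {ℱ : Finset (Finset ℕ)}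
    (hℱ : ℱ ⊆ (range n).powerset) (h𝒜 : 𝒜 ⊆ (range n).powerset)
    (h : ∀ s ∈ 𝒜, range n \ s ∉ ℱ) : #ℱ + #𝒜 ≤ 2 ^ n := by
  have hinj : Set.InjOn (range n \ ·) 𝒜 := fun s hs t ht hst => by
    rw [← sdiff_sdiff_eq_self (mem_powerset.1 (h𝒜 hs)),
      ← sdiff_sdiff_eq_self (mem_powerset.1 (h𝒜 ht))]
    exact congrArg (range n \ ·) hst
  have hdisj : Disjoint ℱ (𝒜.image (range n \ ·)) := by
    rw [disjoint_right]
    rintro _ hs'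
    obtain ⟨s, hs, rfl⟩ := mem_image.1 hs'
    exact h s hs
  calc #ℱ + #𝒜 = #(ℱ ∪ 𝒜.image (range n \ ·)) := by
        rw [card_union_of_disjoint hdisj, card_image_of_injOn hinj]
    _ ≤ #(range n).powerset := card_le_card (union_subset hℱ (image_subset_iff.2 fun s _ =>
        mem_powerset.2 sdiff_subset))
    _ = 2 ^ n := by rw [card_powerset, card_range]

theorem card_le_sum_choose_of_card_symmDiff_le {t : ℕ}
    (h𝒜 : 𝒜 ⊆ (range n).powerset) (hD : ∀ a ∈ 𝒜, ∀ b ∈ 𝒜, #(a ∆ b) ≤ 2 * t) (htn : 2 * t < n) :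
    #𝒜 ≤ ∑ i ∈ range (t + 1), n.choose i := by
  obtain ⟨ℬ, hℬn, hcard, hℬD, hlow, hshift⟩ := exists_isLowerSet_isShifted h𝒜 hD
  rw [← hcard]
  by_contra! hbig
  set s := n - (2 * t + 1)
  have hF := card_nbhd_iterate_gt (s := s) (by omega) hℬn hlow hshift hbig
  rw [show t + 1 + s = n - t by omega] at hF
  have hcompl : ∀ r ∈ ℬ, range n \ r ∉ (nbhd n)^[s] ℬ := by
    intro r hr hmem
    obtain ⟨q, hq, hqr, hqcard⟩ := exists_subset_of_mem_nbhd_iterate hmem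
    have hrn := mem_powerset.1 (hℬn hr)
    have hdisj : Disjoint q r := (subset_sdiff.1 hqr).2
    have hqr := hℬD q hq r hr
    rw [hdisj.symmDiff_eq_sup, sup_eq_union, card_union_of_disjoint hdisj] at hqr
    rw [card_sdiff_of_subset hrn, card_range] at hqcard
    have := card_range n ▸ card_le_card hrn
    omega
  have := card_add_card_le_two_pow_of_sdiff_notMem (nbhd_iterate_subset_powerset hℬn s) hℬn hcompl
  have := Nat.sum_range_choose_sub_add_sum_range_choose (n := n) (t := t) (by omega)
  omega

end Finset

section Cube

variable {d : ℕ}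

def trueIndices (x : Fin d → Bool) : Finset ℕ := ({i | x i = true} : Finset (Fin d)).image Fin.val

theorem trueIndices_subset_range (x : Fin d → Bool) : trueIndices x ⊆ range d := by
  intro i hi
  obtain ⟨i, -, rfl⟩ := mem_image.1 hi
  exact mem_range.2 i.isLt

theorem card_trueIndices_symmDiff (x y : Fin d → Bool) :
    #(trueIndices x ∆ trueIndices y) = hammingDist x y := by
  rw [trueIndices, trueIndices, ← image_symmDiff _ _ Fin.val_injective,
    card_image_of_injective _ Fin.val_injective, hammingDist]
  congr 1
  ext i
  cases hx : x i <;> cases hy : y i <;> simp [mem_symmDiff, hx, hy]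

theorem trueIndices_injective : Function.Injective (trueIndices (d := d)) := by
  intro x y hxy
  rw [← hammingDist_eq_zero, ← card_trueIndices_symmDiff, hxy, symmDiff_self, bot_eq_empty,
    card_empty]

end Cube

theorem stmt_3 {d t : ℕ} (A : Finset (Fin d → Bool))
    (hdiam : ∀ x ∈ A, ∀ y ∈ A, hammingDist x y ≤ 2 * t)
    (ht : 2 * t ≤ d - 1) (hd : 1 ≤ d) :
    A.card ≤ ∑ i ∈ Finset.range (t + 1), d.choose i := by
  rw [← card_image_of_injective A trueIndices_injective]
  refine card_le_sum_choose_of_card_symmDiff_le (fun s hs => ?_) (fun a ha b hb => ?_) (by omega)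
  · obtain ⟨x, -, rfl⟩ := mem_image.1 hs
    exact mem_powerset.2 (trueIndices_subset_range x)
  · obtain ⟨x, hx, rfl⟩ := mem_image.1 ha
    obtain ⟨y, hy, rfl⟩ := mem_image.1 hb
    rw [card_trueIndices_symmDiff]
    exact hdiam x hx y hy
end

section
/- For every d ≥ 2, n(d-1,d) = 3·2^{d-2}, where n(k,d) is the maximum size of a family F ⊆ {0,1,*}^d such that every two distinct members x,y satisfy 1 ≤ D(x,y) ≤ k. -/
open Finset

/-- Number of coordinates where one string has 0 and the other 1. -/
def Dd {d : ℕ} (x y : Fin d → Option Bool) : ℕ :=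
  (univ.filter fun i => ∃ b : Bool, x i = some b ∧ y i = some !b).card

/-- The subcube of binary strings agreeing with `x` on all non-joker coordinates. -/
def Hcube {d : ℕ} (x : Fin d → Option Bool) : Finset (Fin d → Bool) :=
  univ.filter fun u => ∀ i : Fin d, ∀ b : Bool, x i = some b → u i = b

/-- Number of joker (`*`) coordinates of `x`. -/
def jok {d : ℕ} (x : Fin d → Option Bool) : ℕ :=
  (univ.filter fun i => x i = none).card

/-- `k`-neighborly family of strings in `{0,1,*}^d`. -/
def Nbly {d : ℕ} (k : ℕ) (F : Finset (Fin d → Option Bool)) : Prop :=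
  ∀ x ∈ F, ∀ y ∈ F, x ≠ y → 1 ≤ Dd x y ∧ Dd x y ≤ k

/-- `n(k,d)`: maximum size of a `k`-neighborly family in `{0,1,*}^d`. -/
noncomputable def nbox (k d : ℕ) : ℕ :=
  sSup {n | ∃ F : Finset (Fin d → Option Bool), Nbly k F ∧ F.card = n}

/-!
Members of a neighborly family have pairwise disjoint subcubes `Hcube x`, of size `2 ^ jok x`.
Members without jokers are single points of the cube, and no two of them are antipodal (that
would put them at distance `d`), so there are at most `2 ^ (d - 1)` of them, while every other
member uses up at least two points. Counting gives `4 |F| ≤ 3 · 2 ^ d`. Equality holds for the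
family of all strings `0u` together with all strings `1*v`.
-/

section

variable {d : ℕ}

lemma Dd_comm (x y : Fin d → Option Bool) : Dd x y = Dd y x := by
  unfold Dd
  congr 1
  ext i
  simp only [mem_filter, mem_univ, true_and]
  constructor <;> rintro ⟨b, hx, hy⟩ <;> exact ⟨!b, hy, by simpa using hx⟩

lemma Dd_cons {n : ℕ} (a b : Option Bool) (x y : Fin n → Option Bool) :
    Dd (Fin.cons a x : Fin (n + 1) → Option Bool) (Fin.cons b y) =
      (if ∃ c, a = some c ∧ b = some !c then 1 else 0) + Dd x y := by
  simp only [Dd, Fin.card_filter_univ_succ', Fin.cons_zero, Fin.cons_succ]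

lemma Dd_some_comp (u v : Fin d → Bool) : Dd (some ∘ u) (some ∘ v) = hammingDist u v := by
  unfold Dd hammingDist
  congr 1
  ext i
  simp only [mem_filter, mem_univ, true_and, Function.comp_apply, Option.some.injEq,
    exists_eq_left']
  cases u i <;> cases v i <;> simp

lemma Dd_le_sub_one_of_eq_none {x y : Fin d → Option Bool} {i : Fin d} (h : y i = none) :
    Dd x y ≤ d - 1 :=
  calc Dd x y ≤ #(univ.erase i) :=
        card_le_card fun j hj => mem_erase.mpr ⟨by rintro rfl; simp [h] at hj, mem_univ j⟩
    _ = d - 1 := by simp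

lemma disjoint_Hcube {x y : Fin d → Option Bool} (h : 1 ≤ Dd x y) :
    Disjoint (Hcube x) (Hcube y) := by
  obtain ⟨i, hi⟩ := card_pos.mp h
  obtain ⟨b, hx, hy⟩ := (mem_filter.mp hi).2
  refine disjoint_left.mpr fun u hux huy => ?_
  have hu : u i = b := (mem_filter.mp hux).2 i b hx
  have hu' : u i = !b := (mem_filter.mp huy).2 i (!b) hy
  simp [hu] at hu'

lemma Hcube_eq_piFinset (x : Fin d → Option Bool) :
    Hcube x = Fintype.piFinset fun i => ((x i).map ({·})).getD univ := by
  ext u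
  simp only [Hcube, mem_filter, mem_univ, true_and, Fintype.mem_piFinset]
  refine forall_congr' fun i => ?_
  cases x i <;> simp

lemma card_Hcube (x : Fin d → Option Bool) : #(Hcube x) = 2 ^ jok x := by
  rw [Hcube_eq_piFinset, Fintype.card_piFinset, jok, ← prod_const, prod_filter]
  refine prod_congr rfl fun i _ => ?_
  cases x i <;> rfl

lemma Nbly.sum_card_Hcube_le {k : ℕ} {F : Finset (Fin d → Option Bool)} (hF : Nbly k F) :
    ∑ x ∈ F, #(Hcube x) ≤ 2 ^ d := by
  rw [← card_biUnion fun x hx y hy hxy => disjoint_Hcube (hF x hx y hy hxy).1]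
  exact (card_le_univ _).trans_eq (by simp)

lemma two_mul_card_le_of_disjoint_map {α : Type*} [Fintype α] (f : α ↪ α) {S : Finset α}
    (h : Disjoint S (S.map f)) : 2 * #S ≤ Fintype.card α := by
  classical
  rw [two_mul]
  nth_rw 2 [← card_map f]
  rw [← card_union_of_disjoint h]
  exact card_le_univ _

lemma exists_eq_some_comp_of_jok_eq_zero {x : Fin d → Option Bool} (h : jok x = 0) :
    ∃ u : Fin d → Bool, x = some ∘ u := by
  have hx : ∀ i, x i ≠ none := by simpa [jok, filter_eq_empty_iff] using h
  exact ⟨fun i => (x i).get (Option.ne_none_iff_isSome.mp (hx i)), funext fun i => by simp⟩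

lemma Nbly.two_mul_card_filter_jok_eq_zero_le {k : ℕ} (hk : k < d)
    {F : Finset (Fin d → Option Bool)} (hF : Nbly k F) :
    2 * #(F.filter (jok · = 0)) ≤ 2 ^ d := by
  set S := univ.filter fun u : Fin d → Bool => some ∘ u ∈ F
  have hS : F.filter (jok · = 0) ⊆ S.image (some ∘ ·) := by
    intro x hx
    obtain ⟨hxF, hx0⟩ := mem_filter.mp hx
    obtain ⟨u, rfl⟩ := exists_eq_some_comp_of_jok_eq_zero hx0
    exact mem_image_of_mem _ (mem_filter.mpr ⟨mem_univ _, hxF⟩)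
  let neg : (Fin d → Bool) ↪ (Fin d → Bool) :=
    ⟨fun u i => !u i, Bool.not_injective.comp_left⟩
  have hanti : Disjoint S (S.map neg) := by
    refine disjoint_left.mpr fun u hu hu' => ?_
    obtain ⟨v, hv, rfl⟩ := mem_map.mp hu'
    have hvu : Dd (some ∘ v) (some ∘ neg v) = d := by
      simp [neg, Dd_some_comp, hammingDist]
    have hne : some ∘ v ≠ some ∘ neg v := by
      intro h
      simpa [neg] using congrFun h ⟨0, by omega⟩
    have := (hF _ (mem_filter.mp hv).2 _ (mem_filter.mp hu).2 hne).2
    omega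
  calc 2 * #(F.filter (jok · = 0)) ≤ 2 * #S := by
        gcongr; exact (card_le_card hS).trans card_image_le
    _ ≤ 2 ^ d := (two_mul_card_le_of_disjoint_map neg hanti).trans_eq (by simp)

lemma Nbly.four_mul_card_le {k : ℕ} (hk : k < d) {F : Finset (Fin d → Option Bool)}
    (hF : Nbly k F) : 4 * #F ≤ 3 * 2 ^ d := by
  have hfull := hF.two_mul_card_filter_jok_eq_zero_le hk
  have hweight : #F + #(F.filter (¬jok · = 0)) ≤ 2 ^ d :=
    calc #F + #(F.filter (¬jok · = 0))
        = ∑ x ∈ F, (1 + if ¬jok x = 0 then 1 else 0) := by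
          rw [sum_add_distrib, card_eq_sum_ones, sum_boole]; simp
      _ ≤ ∑ x ∈ F, #(Hcube x) := by
          refine sum_le_sum fun x _ => ?_
          rw [card_Hcube]
          split_ifs with h
          · simp [h]
          · exact Nat.one_lt_two_pow h
      _ ≤ 2 ^ d := hF.sum_card_Hcube_le
  have hsplit := card_filter_add_card_filter_not (s := F) (jok · = 0)
  omega

end

def extremalFamily (m : ℕ) : Finset (Fin (m + 2) → Option Bool) :=
  (univ.image fun u : Fin (m + 1) → Bool => Fin.cons (some false) (some ∘ u)) ∪
    univ.image fun v : Fin m → Bool => Fin.cons (some true) (Fin.cons none (some ∘ v))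

lemma card_extremalFamily (m : ℕ) : #(extremalFamily m) = 3 * 2 ^ m := by
  have hsome {n : ℕ} : Function.Injective (some ∘ · : (Fin n → Bool) → Fin n → Option Bool) :=
    (Option.some_injective Bool).comp_left
  have hA : Function.Injective fun u : Fin (m + 1) → Bool =>
      (Fin.cons (some false) (some ∘ u) : Fin (m + 2) → Option Bool) :=
    (Fin.cons_right_injective _).comp hsome
  have hB : Function.Injective fun v : Fin m → Bool =>
      (Fin.cons (some true) (Fin.cons none (some ∘ v)) : Fin (m + 2) → Option Bool) :=
    (Fin.cons_right_injective _).comp ((Fin.cons_right_injective _).comp hsome)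
  rw [extremalFamily, card_union_of_disjoint, card_image_of_injective _ hA,
    card_image_of_injective _ hB]
  · simp only [card_univ, Fintype.card_fun, Fintype.card_bool, Fintype.card_fin]
    ring
  · simp [disjoint_left]

lemma nbly_extremalFamily (m : ℕ) : Nbly (m + 1) (extremalFamily m) := by
  intro x hx y hy hxy
  simp only [extremalFamily, mem_union, mem_image, mem_univ, true_and] at hx hy
  rcases hx with ⟨u, rfl⟩ | ⟨u, rfl⟩ <;> rcases hy with ⟨v, rfl⟩ | ⟨v, rfl⟩
  · have huv : u ≠ v := by rintro rfl; exact hxy rfl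
    rw [Dd_cons, if_neg (by simp), zero_add, Dd_some_comp]
    exact ⟨hammingDist_pos.mpr huv, hammingDist_le_card_fintype.trans_eq (Fintype.card_fin _)⟩
  · have := Dd_le_sub_one_of_eq_none (x := some ∘ u) (y := Fin.cons none (some ∘ v)) (i := 0) rfl
    rw [Dd_cons, if_pos ⟨false, rfl, rfl⟩]
    omega
  · have := Dd_le_sub_one_of_eq_none (x := some ∘ v) (y := Fin.cons none (some ∘ u)) (i := 0) rfl
    rw [Dd_comm, Dd_cons, if_pos ⟨false, rfl, rfl⟩]
    omega
  · have huv : u ≠ v := by rintro rfl; exact hxy rfl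
    rw [Dd_cons, Dd_cons, if_neg (by simp), if_neg (by simp), Dd_some_comp]
    have hle : hammingDist u v ≤ m := hammingDist_le_card_fintype.trans_eq (Fintype.card_fin m)
    have hpos := hammingDist_pos.mpr huv
    omega

theorem stmt_6 {d : ℕ} (hd : 2 ≤ d) : nbox (d - 1) d = 3 * 2 ^ (d - 2) := by
  obtain ⟨m, rfl⟩ : ∃ m, d = m + 2 := ⟨d - 2, by omega⟩
  simp only [nbox, Nat.add_sub_cancel, show m + 2 - 1 = m + 1 by omega]
  refine IsGreatest.csSup_eq ⟨⟨extremalFamily m, nbly_extremalFamily m,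
    card_extremalFamily m⟩, ?_⟩
  rintro _ ⟨F, hF, rfl⟩
  have := hF.four_mul_card_le (by omega)
  rw [pow_add] at this
  omega
end

section
/- For every d ≥ 2, n(d-1,d) ≤ 3·2^{d-2}: if F ⊆ {0,1,*}^d satisfies 1 ≤ D(x,y) ≤ d-1 for all distinct x,y ∈ F, then |F| ≤ 3·2^{d-2}. -/
open Finset

lemma getD_mem_Hcube {d : ℕ} (x : Fin d → Option Bool) (b : Bool) :
    (fun i => (x i).getD b) ∈ Hcube x := by
  simp only [Hcube, mem_filter, mem_univ, true_and]
  intro i c hc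
  simp [hc]

lemma Hcube_disjoint {d : ℕ} {x y : Fin d → Option Bool} (hxy : 1 ≤ Dd x y) :
    Disjoint (Hcube x) (Hcube y) := by
  rw [Finset.disjoint_left]
  intro u hux huy
  obtain ⟨i, hi⟩ := Finset.card_pos.mp hxy
  simp only [mem_filter, mem_univ, true_and] at hi
  obtain ⟨b, hxb, hyb⟩ := hi
  simp only [Hcube, mem_filter, mem_univ, true_and] at hux huy
  have h1 := hux i b hxb
  have h2 := huy i (!b) hyb
  rw [h1] at h2
  simp at h2

lemma two_le_Hcube_card {d : ℕ} {x : Fin d → Option Bool} (hx : jok x ≠ 0) :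
    2 ≤ (Hcube x).card := by
  have : (univ.filter fun i => x i = none).Nonempty := by
    rw [← Finset.card_pos]; exact Nat.pos_of_ne_zero hx
  obtain ⟨j, hj⟩ := this
  simp only [mem_filter, mem_univ, true_and] at hj
  apply Finset.one_lt_card.mpr
  refine ⟨_, getD_mem_Hcube x false, _, getD_mem_Hcube x true, ?_⟩
  intro heq
  have := congrFun heq j
  simp [hj] at this

lemma Hcube_card_pos {d : ℕ} (x : Fin d → Option Bool) : 1 ≤ (Hcube x).card :=
  Finset.card_pos.mpr ⟨_, getD_mem_Hcube x false⟩

theorem stmt_7 {d : ℕ} (hd : 2 ≤ d) (F : Finset (Fin d → Option Bool))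
    (h : Nbly (d - 1) F) : F.card ≤ 3 * 2 ^ (d - 2) := by
  classical
  obtain ⟨m, rfl⟩ : ∃ m, d = m + 2 := ⟨d - 2, by omega⟩
  -- Part 1: total cube bound
  have hdisj : (F : Set (Fin (m + 2) → Option Bool)).PairwiseDisjoint Hcube := by
    intro x hx y hy hxy
    exact Hcube_disjoint (h x hx y hy hxy).1
  have hsum : ∑ x ∈ F, (Hcube x).card ≤ 2 ^ (m + 2) := by
    rw [← Finset.card_biUnion (fun x hx y hy hxy => hdisj hx hy hxy)]
    calc (F.biUnion Hcube).card ≤ (univ : Finset (Fin (m + 2) → Bool)).card :=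
          Finset.card_le_card (Finset.subset_univ _)
      _ = 2 ^ (m + 2) := by simp [Finset.card_univ]
  -- split F
  set F0 := F.filter (fun x => jok x = 0) with hF0
  set F1 := F.filter (fun x => ¬ jok x = 0) with hF1
  have hsplit : F0.card + F1.card = F.card := Finset.card_filter_add_card_filter_not _
  -- lower bound the sum
  have hlb : F0.card + 2 * F1.card ≤ ∑ x ∈ F, (Hcube x).card := by
    have : ∑ x ∈ F, (Hcube x).card
        = ∑ x ∈ F0, (Hcube x).card + ∑ x ∈ F1, (Hcube x).card := by
      rw [hF0, hF1, Finset.sum_filter_add_sum_filter_not]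
    rw [this]
    have h1 : F0.card ≤ ∑ x ∈ F0, (Hcube x).card := by
      calc F0.card = ∑ _x ∈ F0, 1 := by simp
        _ ≤ _ := Finset.sum_le_sum (fun x _ => Hcube_card_pos x)
    have h2 : 2 * F1.card ≤ ∑ x ∈ F1, (Hcube x).card := by
      calc 2 * F1.card = ∑ _x ∈ F1, 2 := by rw [Finset.sum_const, smul_eq_mul, mul_comm]
        _ ≤ _ := Finset.sum_le_sum (fun x hx => by
            simp only [hF1, mem_filter] at hx
            exact two_le_Hcube_card hx.2)
    omega
  -- Part 2: F0 bound via complement-free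
  have hF0card : F0.card ≤ 2 ^ (m + 2 - 1) := by
    set π : (Fin (m + 2) → Option Bool) → (Fin (m + 2) → Bool) := fun x i => (x i).getD false with hπ
    have hsome : ∀ x ∈ F0, ∀ i, x i = some (π x i) := by
      intro x hx i
      simp only [hF0, mem_filter] at hx
      have : x i ≠ none := by
        intro hni
        have : i ∈ univ.filter fun i => x i = none := by simp [hni]
        have := Finset.card_pos.mpr ⟨i, this⟩
        rw [show (univ.filter fun i => x i = none).card = jok x from rfl, hx.2] at this
        omega
      cases hxi : x i with
      | none => exact absurd hxi this
      | some c => simp [hπ, hxi]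
    set S := F0.image π with hS
    have hScard : S.card = F0.card := by
      apply Finset.card_image_of_injOn
      intro x hx y hy hxy
      funext i
      rw [hsome x hx i, hsome y hy i, hxy]
    -- no complementary pair in S
    have hcompl : ∀ u ∈ S, (fun i => !(u i)) ∉ S := by
      intro u hu hnu
      simp only [hS, mem_image] at hu hnu
      obtain ⟨x, hx, hxu⟩ := hu
      obtain ⟨y, hy, hyu⟩ := hnu
      have hxF : x ∈ F := (Finset.mem_filter.mp hx).1
      have hyF : y ∈ F := (Finset.mem_filter.mp hy).1
      have hne : x ≠ y := by
        intro hxyeq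
        subst hxyeq
        rw [hxu] at hyu
        have := congrFun hyu ⟨0, by omega⟩
        simp at this
      have hDd : Dd x y = (m + 2) := by
        have : (univ.filter fun i => ∃ b : Bool, x i = some b ∧ y i = some !b) = univ := by
          apply Finset.eq_univ_of_forall
          intro i
          simp only [mem_filter, mem_univ, true_and]
          refine ⟨u i, ?_, ?_⟩
          · rw [← hxu]; exact hsome x hx i
          · have := hsome y hy i
            rw [hyu] at this; exact this
        rw [Dd, this]; simp
      have := (h x hxF y hyF hne).2
      omega
    -- S and its complement image are disjoint
    have hdisjS : Disjoint S (S.image fun u i => !(u i)) := by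
      rw [Finset.disjoint_left]
      intro u hu hu'
      simp only [mem_image] at hu'
      obtain ⟨w, hw, hwu⟩ := hu'
      apply hcompl u hu
      have hwu' : ∀ i, u i = !(w i) := fun i => (congrFun hwu i).symm
      have : (fun i => !(u i)) = w := by
        funext i; simp [hwu' i]
      rw [this]; exact hw
    have hScard2 : (S.image fun u i => !(u i)).card = S.card := by
      apply Finset.card_image_of_injective
      intro a b hab
      funext i
      have := congrFun hab i
      simpa using this
    have : S.card + S.card ≤ 2 ^ (m + 2) := by
      calc S.card + S.card = (S ∪ S.image fun u i => !(u i)).card := by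
            rw [Finset.card_union_of_disjoint hdisjS, hScard2]
        _ ≤ (univ : Finset (Fin (m + 2) → Bool)).card := Finset.card_le_card (Finset.subset_univ _)
        _ = 2 ^ (m + 2) := by simp [Finset.card_univ]
    have h2d : (2:ℕ) ^ (m + 2) = 2 * 2 ^ (m + 2 - 1) := by
      show (2:ℕ) ^ (m + 2) = 2 * 2 ^ (m + 1); ring
    clear hdisjS hScard2 hcompl hsome hS hπ
    clear_value S π
    omega
  have hd1 : (2:ℕ) ^ (m + 2 - 1) = 2 * 2 ^ m := by
    show (2:ℕ) ^ (m + 1) = 2 * 2 ^ m; ring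
  have hd2 : (2:ℕ) ^ (m + 2) = 4 * 2 ^ m := by ring
  show F.card ≤ 3 * 2 ^ m
  clear hF0 hF1 hdisj h
  clear_value F0 F1
  omega
end

section
/- For every d ≥ 2 there exists a family F ⊆ {0,1,*}^d of size 3·2^{d-2} such that every two distinct members x,y satisfy 1 ≤ D(x,y) ≤ d-1. For example, F = {v ∈ {0,1}^d : v_1 = 0} ∪ {x : x_1 = 1, x_2 = *, x_3⋯x_d ∈ {0,1}^{d-2}} works. -/
open Finset

/-! The three strings `00`, `01`, `1*` pairwise conflict in exactly one coordinate, so they form a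
`1`-neighborly family in dimension `2`. Appending a free binary block of length `n` to the members
of a `k`-neighborly family adds the Hamming distance of the blocks to `D`, which gives a
`(k + n)`-neighborly family of `2 ^ n` times the size. -/

section Neighborly

variable {m n : ℕ}

theorem Dd_self (x : Fin m → Option Bool) : Dd x x = 0 := by
  simp only [Dd, card_eq_zero, filter_eq_empty_iff]
  rintro i - ⟨b, hb, hnb⟩
  exact (Bool.eq_not_self b).mp (Option.some_injective _ (hb.symm.trans hnb))

theorem Dd_append (x y : Fin m → Option Bool) (u v : Fin n → Option Bool) :
    Dd (Fin.append x u) (Fin.append y v) = Dd x y + Dd u v := by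
  simp only [Dd, card_filter, Fin.sum_univ_add, Fin.append_left, Fin.append_right]

theorem Dd_some (u v : Fin n → Bool) :
    Dd (fun i => some (u i)) (fun i => some (v i)) = hammingDist u v := by
  unfold Dd hammingDist
  congr 1
  refine filter_congr fun i _ => ?_
  simp only [Option.some.injEq, exists_eq_left']
  rw [Bool.eq_not_iff, ne_comm]

def appendCube (F : Finset (Fin m → Option Bool)) (n : ℕ) : Finset (Fin (m + n) → Option Bool) :=
  (F ×ˢ univ).image fun p : (Fin m → Option Bool) × (Fin n → Bool) =>
    Fin.append p.1 fun i => some (p.2 i)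

theorem Dd_append_some (x y : Fin m → Option Bool) (u v : Fin n → Bool) :
    Dd (Fin.append x fun i => some (u i)) (Fin.append y fun i => some (v i)) =
      Dd x y + hammingDist u v := by
  rw [Dd_append, Dd_some]

variable {k : ℕ} {F : Finset (Fin m → Option Bool)}

theorem Nbly.one_le_Dd_append_some (hF : Nbly k F) {x y : Fin m → Option Bool} (hx : x ∈ F)
    (hy : y ∈ F) {u v : Fin n → Bool} (hne : (x, u) ≠ (y, v)) :
    1 ≤ Dd (Fin.append x fun i => some (u i)) (Fin.append y fun i => some (v i)) := by
  rw [Dd_append_some]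
  by_cases hxy : x = y
  · subst hxy
    have huv : u ≠ v := fun h => hne (by rw [h])
    have := hammingDist_pos.mpr huv
    omega
  · have := (hF x hx y hy hxy).1
    omega

theorem nbly_appendCube (hF : Nbly k F) : Nbly (k + n) (appendCube F n) := by
  simp only [Nbly, appendCube, mem_image, mem_product, mem_univ, and_true, Prod.exists]
  rintro _ ⟨x, u, hx, rfl⟩ _ ⟨y, v, hy, rfl⟩ hne
  refine ⟨hF.one_le_Dd_append_some hx hy fun h => hne (by cases h; rfl), ?_⟩
  have hDxy : Dd x y ≤ k := by
    by_cases hxy : x = y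
    · simp [hxy, Dd_self]
    · exact (hF x hx y hy hxy).2
  calc _ = Dd x y + hammingDist u v := Dd_append_some x y u v
    _ ≤ k + n := add_le_add hDxy (by simpa using hammingDist_le_card_fintype (x := u) (y := v))

theorem card_appendCube (hF : Nbly k F) : (appendCube F n).card = F.card * 2 ^ n := by
  rw [appendCube, card_image_of_injOn, card_product]
  · simp
  rintro ⟨x, u⟩ hxu ⟨y, v⟩ hyv heq
  simp only [coe_product, coe_univ, Set.mem_prod, mem_coe, Set.mem_univ, and_true] at hxu hyv
  by_contra hne
  have := hF.one_le_Dd_append_some hxu hyv hne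
  simp only at heq
  rw [heq, Dd_self] at this
  omega

def threeStrings : Finset (Fin 2 → Option Bool) :=
  {![some false, some false], ![some false, some true], ![some true, none]}

theorem nbly_threeStrings : Nbly 1 threeStrings := by
  unfold Nbly threeStrings
  decide

theorem card_threeStrings : threeStrings.card = 3 := by
  decide

end Neighborly

theorem stmt_8 {d : ℕ} (hd : 2 ≤ d) :
    ∃ F : Finset (Fin d → Option Bool),
      F.card = 3 * 2 ^ (d - 2) ∧ Nbly (d - 1) F := by
  obtain ⟨n, rfl⟩ : ∃ n, d = 2 + n := ⟨d - 2, by omega⟩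
  refine ⟨appendCube threeStrings n, ?_, ?_⟩
  · rw [card_appendCube nbly_threeStrings, card_threeStrings, Nat.add_sub_cancel_left]
  · rw [show 2 + n - 1 = 1 + n by omega]
    exact nbly_appendCube nbly_threeStrings
end

section
/- For every d ≥ 1, n(d,d) = 2^d, where n(k,d) is the maximum size of a family F ⊆ {0,1,*}^d with 1 ≤ D(x,y) ≤ k for all distinct x,y ∈ F. -/
open Finset

lemma card_le_of_nbly {d k : ℕ} (F : Finset (Fin d → Option Bool)) (hF : Nbly k F) :
    F.card ≤ 2 ^ d := by
  have key : F.card ≤ (univ : Finset (Fin d → Bool)).card := by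
    apply Finset.card_le_card_of_injOn (fun x i => (x i).getD false)
    · intro x _; exact mem_univ _
    · intro x hx y hy hxy
      by_contra hne
      obtain ⟨h1, _⟩ := hF x hx y hy hne
      rw [Dd, Finset.one_le_card] at h1
      obtain ⟨i, hi⟩ := h1
      simp only [mem_filter] at hi
      obtain ⟨_, b, hxb, hyb⟩ := hi
      have : ((x i).getD false) = ((y i).getD false) := congrFun hxy i
      rw [hxb, hyb] at this
      simp at this
  simpa using key

lemma mem_S {d : ℕ} :
    (2 ^ d) ∈ {n | ∃ F : Finset (Fin d → Option Bool), Nbly d F ∧ F.card = n} := by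
  refine ⟨(univ : Finset (Fin d → Bool)).image (fun u i => some (u i)), ?_, ?_⟩
  · intro x hx y hy hne
    simp only [mem_image, mem_univ, true_and] at hx hy
    obtain ⟨u, rfl⟩ := hx
    obtain ⟨v, rfl⟩ := hy
    have huv : u ≠ v := by rintro rfl; exact hne rfl
    have hset : (univ.filter fun i => ∃ b : Bool,
        (some (u i) : Option Bool) = some b ∧ (some (v i) : Option Bool) = some !b)
        = univ.filter fun i => u i ≠ v i := by
      apply Finset.filter_congr
      intro i _
      constructor
      · rintro ⟨b, hb1, hb2⟩
        simp only [Option.some.injEq] at hb1 hb2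
        subst hb1; rw [hb2]; simp
      · intro h
        exact ⟨u i, rfl, by cases hu : u i <;> cases hv : v i <;> simp_all⟩
    constructor
    · rw [Dd, hset, Finset.one_le_card]
      by_contra h
      rw [Finset.not_nonempty_iff_eq_empty, Finset.filter_eq_empty_iff] at h
      exact huv (funext fun i => by have := h (mem_univ i); simpa using this)
    · rw [Dd, hset]
      calc (univ.filter fun i => u i ≠ v i).card ≤ (univ : Finset (Fin d)).card :=
            Finset.card_filter_le _ _
        _ = d := by simp
  · rw [Finset.card_image_of_injective]
    · simp
    · intro u v h
      funext i
      have := congrFun h i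
      simpa using this

theorem stmt_9 {d : ℕ} (hd : 1 ≤ d) : nbox d d = 2 ^ d := by
  apply le_antisymm
  · apply csSup_le ⟨2 ^ d, mem_S⟩
    rintro n ⟨F, hF, rfl⟩
    exact card_le_of_nbly F hF
  · apply le_csSup
    · exact ⟨2 ^ d, by rintro n ⟨F, hF, rfl⟩; exact card_le_of_nbly F hF⟩
    · exact mem_S
end

section
/- Let 2 ≤ k ≤ m ≤ d be integers with d ≥ C(m,k) - 1 + m. Then n(k,d) ≥ (d - C(m,k) + 1)^k · C(m,k) / m^k. -/
open Finset

/-! Encode a `k`-subset `S` of `Fin m` by a signature, a chain word of length `C(m,k) - 1`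
(the words `1^j 0 *…*`; two distinct ones clash in exactly one position), followed by `m`
blocks of length `q`: block `i ∈ S` is the chain word of `f i ∈ {0, …, q}`, the other blocks
are all jokers. Two codewords with the same `S` clash in at most `|S| = k` blocks, and in at
least one unless they are equal; with different sets they clash once in the signature and in
at most `|S ∩ S'| ≤ k - 1` blocks. This gives `C(m,k) (q+1)^k` codewords in dimension
`C(m,k) - 1 + m q` (padded by jokers to length `d`), and `q = ⌊(d + 1 - C(m,k)) / m⌋` yields
the bound. -/

def clash : Option Bool → Option Bool → ℕ
  | some true, some false => 1
  | some false, some true => 1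
  | _, _ => 0

lemma clash_self (a : Option Bool) : clash a a = 0 := by
  rcases a with _ | _ | _ <;> rfl

lemma clash_comm (a b : Option Bool) : clash a b = clash b a := by
  rcases a with _ | _ | _ <;> rcases b with _ | _ | _ <;> rfl

lemma clash_none_left (b : Option Bool) : clash none b = 0 := by
  rcases b with _ | _ | _ <;> rfl

lemma clash_none_right (a : Option Bool) : clash a none = 0 := by
  rw [clash_comm, clash_none_left]

section BoxDist

variable {ι κ : Type*} [Fintype ι] [Fintype κ]

def boxDist (x y : ι → Option Bool) : ℕ := ∑ i, clash (x i) (y i)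

lemma Dd_eq_boxDist {d : ℕ} (x y : Fin d → Option Bool) : Dd x y = boxDist x y := by
  rw [Dd, card_filter]
  refine sum_congr rfl fun i _ => ?_
  rcases x i with _ | _ | _ <;> rcases y i with _ | _ | _ <;> simp [clash]

lemma boxDist_self (x : ι → Option Bool) : boxDist x x = 0 := by
  simp [boxDist, clash_self]

lemma boxDist_comm (x y : ι → Option Bool) : boxDist x y = boxDist y x := by
  simp only [boxDist, clash_comm]

lemma boxDist_none_left (y : ι → Option Bool) : boxDist (fun _ => none) y = 0 := by
  simp [boxDist, clash_none_left]

lemma boxDist_none_right (x : ι → Option Bool) : boxDist x (fun _ => none) = 0 := by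
  rw [boxDist_comm, boxDist_none_left]

lemma boxDist_comp_equiv (e : κ ≃ ι) (x y : ι → Option Bool) :
    boxDist (x ∘ e) (y ∘ e) = boxDist x y :=
  e.sum_comp fun i => clash (x i) (y i)

lemma boxDist_sumElim (x y : ι → Option Bool) (x' y' : κ → Option Bool) :
    boxDist (Sum.elim x x') (Sum.elim y y') = boxDist x y + boxDist x' y' :=
  Fintype.sum_sum_type _

lemma boxDist_uncurry (x y : ι → κ → Option Bool) :
    boxDist (fun p : ι × κ => x p.1 p.2) (fun p => y p.1 p.2) = ∑ i, boxDist (x i) (y i) :=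
  Fintype.sum_prod_type _

lemma card_le_nbox {α : Type*} [Fintype α] {k d : ℕ} (hι : Fintype.card ι = d)
    (w : α → ι → Option Bool)
    (hw : ∀ a b, a ≠ b → 1 ≤ boxDist (w a) (w b) ∧ boxDist (w a) (w b) ≤ k) :
    Fintype.card α ≤ nbox k d := by
  classical
  let e : Fin d ≃ ι := Fintype.equivOfCardEq (by rw [Fintype.card_fin, hι])
  let v : α → Fin d → Option Bool := fun a => w a ∘ e
  have hv : ∀ a b, a ≠ b → 1 ≤ Dd (v a) (v b) ∧ Dd (v a) (v b) ≤ k := fun a b hab => by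
    simpa only [v, Dd_eq_boxDist, boxDist_comp_equiv] using hw a b hab
  have hinj : Function.Injective v := fun a b hab => by
    by_contra hne
    simpa [hab, Dd_eq_boxDist, boxDist_self] using (hv a b hne).1
  have hnbly : Nbly k (univ.image v) := by
    simp only [Nbly, mem_image, mem_univ, true_and]
    rintro _ ⟨a, rfl⟩ _ ⟨b, rfl⟩ hab
    exact hv a b fun h => hab (h ▸ rfl)
  have hbdd : BddAbove {n | ∃ F : Finset (Fin d → Option Bool), Nbly k F ∧ #F = n} :=
    ⟨Fintype.card (Fin d → Option Bool), by rintro _ ⟨F, -, rfl⟩; exact card_le_univ F⟩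
  calc Fintype.card α = #(univ.image v) := (card_image_of_injective _ hinj).symm
    _ ≤ nbox k d := le_csSup hbdd ⟨_, hnbly, rfl⟩

end BoxDist

def chain (L : ℕ) (n : Fin (L + 1)) : Fin L → Option Bool :=
  fun c => if (c : ℕ) < n then some true else if (c : ℕ) = n then some false else none

lemma boxDist_chain_of_ne {L : ℕ} {n n' : Fin (L + 1)} (hne : n ≠ n') :
    boxDist (chain L n) (chain L n') = 1 := by
  classical
  wlog hlt : n < n' generalizing n n'
  · rw [boxDist_comm]
    exact this hne.symm (lt_of_le_of_ne (not_lt.mp hlt) hne.symm)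
  have hnL : (n : ℕ) < L := by omega
  have hclash : ∀ c : Fin L,
      clash (chain L n c) (chain L n' c) = if c = ⟨n, hnL⟩ then 1 else 0 := by
    intro c
    simp only [chain, Fin.ext_iff]
    split_ifs <;> first | rfl | omega
  simp only [boxDist, hclash, Fintype.sum_ite_eq']

lemma boxDist_chain_le_one {L : ℕ} (n n' : Fin (L + 1)) :
    boxDist (chain L n) (chain L n') ≤ 1 := by
  rcases eq_or_ne n n' with rfl | hne
  · simp [boxDist_self]
  · exact (boxDist_chain_of_ne hne).le

section Blocks

variable {m q : ℕ}

def block (S : Finset (Fin m)) (f : S → Fin (q + 1)) (i : Fin m) : Fin q → Option Bool :=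
  if h : i ∈ S then chain q (f ⟨i, h⟩) else fun _ => none

lemma sum_boxDist_block_le (S S' : Finset (Fin m)) (f : S → Fin (q + 1))
    (f' : S' → Fin (q + 1)) :
    ∑ i, boxDist (block S f i) (block S' f' i) ≤ #(S ∩ S') := by
  classical
  calc ∑ i, boxDist (block S f i) (block S' f' i) ≤ ∑ i, if i ∈ S ∩ S' then 1 else 0 := by
        refine sum_le_sum fun i _ => ?_
        by_cases hi : i ∈ S <;> by_cases hi' : i ∈ S' <;>
          simp [block, hi, hi', boxDist_none_left, boxDist_none_right, boxDist_chain_le_one]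
    _ = #(S ∩ S') := by rw [sum_ite_mem, univ_inter, sum_const, smul_eq_mul, mul_one]

lemma one_le_sum_boxDist_block {S : Finset (Fin m)} {f f' : S → Fin (q + 1)} (hne : f ≠ f') :
    1 ≤ ∑ i, boxDist (block S f i) (block S f' i) := by
  obtain ⟨⟨i, hi⟩, hfi⟩ := Function.ne_iff.mp hne
  calc 1 = boxDist (block S f i) (block S f' i) := by
        simp only [block, dif_pos hi, boxDist_chain_of_ne hfi]
    _ ≤ ∑ i, boxDist (block S f i) (block S f' i) :=
        single_le_sum (f := fun i => boxDist (block S f i) (block S f' i))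
          (fun _ _ => Nat.zero_le _) (mem_univ i)

end Blocks

section LabelledSet

variable {k m q L : ℕ}

abbrev LabelledSet (k m q : ℕ) := Σ S : {S : Finset (Fin m) // #S = k}, (S.1 → Fin (q + 1))

lemma card_labelledSet : Fintype.card (LabelledSet k m q) = m.choose k * (q + 1) ^ k := by
  rw [Fintype.card_sigma]
  simp only [Fintype.card_fun, Fintype.card_coe, Fintype.card_fin]
  rw [sum_congr rfl fun S _ => by rw [S.2], sum_const, card_univ, Fintype.card_finset_len,
    Fintype.card_fin, smul_eq_mul]

variable (sig : {S : Finset (Fin m) // #S = k} → Fin (L + 1)) (r : ℕ)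

def codeword (x : LabelledSet k m q) : Fin L ⊕ (Fin m × Fin q) ⊕ Fin r → Option Bool :=
  Sum.elim (chain L (sig x.1)) (Sum.elim (fun p => block x.1.1 x.2 p.1 p.2) fun _ => none)

lemma boxDist_codeword (x y : LabelledSet k m q) :
    boxDist (codeword sig r x) (codeword sig r y) =
      boxDist (chain L (sig x.1)) (chain L (sig y.1)) +
        ∑ i, boxDist (block x.1.1 x.2 i) (block y.1.1 y.2 i) := by
  simp only [codeword, boxDist_sumElim, boxDist_uncurry, boxDist_none_left, add_zero]

lemma boxDist_codeword_le (x y : LabelledSet k m q) :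
    boxDist (codeword sig r x) (codeword sig r y) ≤ k := by
  obtain ⟨⟨S, hS⟩, f⟩ := x
  obtain ⟨⟨S', hS'⟩, f'⟩ := y
  rw [boxDist_codeword]
  dsimp only
  have hblocks := sum_boxDist_block_le S S' f f'
  rcases eq_or_ne S S' with rfl | hne
  · rw [inter_self, hS] at hblocks
    rw [boxDist_self, zero_add]
    exact hblocks
  · have hlt : #(S ∩ S') < k :=
      hS ▸ card_lt_card ⟨inter_subset_left, fun hsub =>
        hne (eq_of_subset_of_card_le (hsub.trans inter_subset_right) (by omega))⟩
    have := boxDist_chain_le_one (sig ⟨S, hS⟩) (sig ⟨S', hS'⟩)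
    omega

lemma one_le_boxDist_codeword (hsig : Function.Injective sig) {x y : LabelledSet k m q}
    (hne : x ≠ y) : 1 ≤ boxDist (codeword sig r x) (codeword sig r y) := by
  obtain ⟨S, f⟩ := x
  obtain ⟨S', f'⟩ := y
  rw [boxDist_codeword]
  rcases eq_or_ne S S' with rfl | hS
  · have hf : f ≠ f' := fun h => hne (h ▸ rfl)
    exact (one_le_sum_boxDist_block hf).trans (Nat.le_add_left _ _)
  · rw [boxDist_chain_of_ne (hsig.ne hS)]
    exact Nat.le_add_right _ _

end LabelledSet

lemma choose_mul_pow_le_nbox {k m : ℕ} (hkm : k ≤ m) (q r : ℕ) :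
    m.choose k * (q + 1) ^ k ≤ nbox k (m.choose k - 1 + m * q + r) := by
  have hC : 0 < m.choose k := Nat.choose_pos hkm
  let sig : {S : Finset (Fin m) // #S = k} ≃ Fin (m.choose k - 1 + 1) :=
    Fintype.equivFinOfCardEq (by simp [Fintype.card_finset_len]; omega)
  rw [← card_labelledSet (q := q)]
  refine card_le_nbox (by simp; ring) (codeword sig r) fun x y hne => ?_
  exact ⟨one_le_boxDist_codeword sig r sig.injective hne, boxDist_codeword_le sig r x y⟩

theorem stmt_13_general {k m d : ℕ} (hk : 2 ≤ k) (hkm : k ≤ m)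
    (hd : m.choose k - 1 + m ≤ d) :
    ((d + 1 - m.choose k : ℕ) : ℝ) ^ k * (m.choose k : ℝ) / (m : ℝ) ^ k
      ≤ (nbox k d : ℝ) := by
  have hm : 0 < m := by omega
  have hnbox := choose_mul_pow_le_nbox hkm ((d + 1 - m.choose k) / m)
  have hC : 0 < m.choose k := Nat.choose_pos hkm
  generalize m.choose k = C at hC hd hnbox ⊢
  generalize hq : (d + 1 - C) / m = q at hnbox
  have hdecomp : C - 1 + m * q + (d - (C - 1 + m * q)) = d := by
    have : m * q ≤ d + 1 - C := hq ▸ Nat.mul_div_le _ _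
    omega
  have hround : d + 1 - C ≤ m * (q + 1) := hq ▸ (Nat.lt_mul_div_succ _ hm).le
  replace hnbox := hdecomp ▸ hnbox (d - (C - 1 + m * q))
  rw [div_le_iff₀ (by positivity)]
  calc ((d + 1 - C : ℕ) : ℝ) ^ k * C ≤ ((m * (q + 1) : ℕ) : ℝ) ^ k * C := by gcongr
    _ = ((C * (q + 1) ^ k : ℕ) : ℝ) * (m : ℝ) ^ k := by
        rw [Nat.cast_mul, mul_pow]; push_cast; ring
    _ ≤ nbox k d * (m : ℝ) ^ k := by gcongr

theorem stmt_13 {k m d : ℕ} (hk : 2 ≤ k) (hkm : k ≤ m) (hmd : m ≤ d)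
    (hd : m.choose k - 1 + m ≤ d) :
    ((d + 1 - m.choose k : ℕ) : ℝ) ^ k * (m.choose k : ℝ) / (m : ℝ) ^ k
      ≤ (nbox k d : ℝ) :=
  stmt_13_general hk hkm hd
end
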